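/- arXiv:2302.02451 — 2 statements merged into one kernel-verified Lean document; each statement's English description precedes it below -/
import Mathlib

section
/- Let X ∈ ℝ^{n×q} and Y ∈ ℝ^{n×d} be nonzero matrices with rows x_i and y_i, let γ := ‖X‖_op²/‖Y‖_op², and suppose the positive reals {p_i}_{i∈[n]} satisfy p_i ≥ (1/4)·(‖x_i‖₂² + γ‖y_i‖₂²)/(‖X‖_F² + γ‖Y‖_F²) for all i ∈ [n]. Then for every i ∈ [n], ‖x_i‖₂·‖y_i‖₂ ≤ 2·p_i·‖X‖_op·‖Y‖_op·(srank(X) + srank(Y)); equivalently, the per-sample matrix (1/p_i)·x_iᵀy_i has spectral norm at most 2‖X‖_op‖Y‖_op(srank(X) + srank(Y)). -/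
/- With c = ‖X‖_op/‖Y‖_op, the sampling condition reads ‖x_i‖² + c²‖y_i‖² ≤ 4 p_i (‖X‖_F² + c²‖Y‖_F²),
and by AM-GM the left side is at least 2c‖x_i‖‖y_i‖. Dividing by 2c gives the claim, because
(‖X‖_F² + c²‖Y‖_F²)/c = ‖X‖_op‖Y‖_op (srank X + srank Y). -/

/-- The spectral (operator) norm of a real matrix. -/
noncomputable def opNorm {m n : ℕ} (M : Matrix (Fin m) (Fin n) ℝ) : ℝ :=
  ‖LinearMap.toContinuousLinearMap (Matrix.toEuclideanLin M)‖

/-- The Frobenius norm of a real matrix. -/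
noncomputable def frobNorm {m n : ℕ} (M : Matrix (Fin m) (Fin n) ℝ) : ℝ :=
  Real.sqrt (∑ i, ∑ j, (M i j) ^ 2)

/-- The stable rank ‖M‖_F² / ‖M‖_op². -/
noncomputable def srank {m n : ℕ} (M : Matrix (Fin m) (Fin n) ℝ) : ℝ :=
  frobNorm M ^ 2 / opNorm M ^ 2

section MatrixNorms

variable {m n : ℕ}

lemma opNorm_pos {M : Matrix (Fin m) (Fin n) ℝ} (h : M ≠ 0) : 0 < opNorm M := by
  simpa [opNorm] using h

lemma frobNorm_pos {M : Matrix (Fin m) (Fin n) ℝ} (h : M ≠ 0) : 0 < frobNorm M := by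
  obtain ⟨i, j, hij⟩ : ∃ i j, M i j ≠ 0 := by simpa [← Matrix.ext_iff] using h
  have hrow : 0 < ∑ j, M i j ^ 2 :=
    Finset.sum_pos' (fun _ _ => sq_nonneg _) ⟨j, Finset.mem_univ j, by positivity⟩
  exact Real.sqrt_pos.2 <| hrow.trans_le <|
    Finset.single_le_sum (f := fun i => ∑ j, M i j ^ 2)
      (fun i _ => Finset.sum_nonneg fun j _ => sq_nonneg (M i j)) (Finset.mem_univ i)

lemma opNorm_smul (c : ℝ) (M : Matrix (Fin m) (Fin n) ℝ) :
    opNorm (c • M) = |c| * opNorm M := by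
  simp [opNorm, norm_smul]

lemma opNorm_vecMulVec (x : Fin m → ℝ) (y : Fin n → ℝ) :
    opNorm (Matrix.vecMulVec x y) = Real.sqrt (∑ j, x j ^ 2) * Real.sqrt (∑ j, y j ^ 2) := by
  have hrankOne := InnerProductSpace.symm_toEuclideanLin_rankOne (𝕜 := ℝ)
    (WithLp.toLp 2 x) (WithLp.toLp 2 y)
  rw [star_trivial] at hrankOne
  rw [opNorm, ← hrankOne, LinearEquiv.apply_symm_apply]
  refine (InnerProductSpace.norm_rankOne (𝕜 := ℝ) (WithLp.toLp 2 x) (WithLp.toLp 2 y)).trans ?_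
  simp [EuclideanSpace.norm_eq]

end MatrixNorms

lemma mul_le_of_sampling_lower_bound {a b A B F G p : ℝ} (hA : 0 < A) (hB : 0 < B) (hF : 0 < F)
    (h : 1 / 4 * ((a ^ 2 + A ^ 2 / B ^ 2 * b ^ 2) / (F ^ 2 + A ^ 2 / B ^ 2 * G ^ 2)) ≤ p) :
    a * b ≤ 2 * p * A * B * (F ^ 2 / A ^ 2 + G ^ 2 / B ^ 2) := by
  set c := A / B
  have hc : 0 < c := div_pos hA hB
  rw [← div_pow] at h
  have hD : 0 < F ^ 2 + c ^ 2 * G ^ 2 := by positivity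
  have hsum : a ^ 2 + c ^ 2 * b ^ 2 ≤ 4 * p * (F ^ 2 + c ^ 2 * G ^ 2) := by
    rw [← div_le_iff₀ hD]
    linarith
  have amgm : 2 * c * (a * b) ≤ a ^ 2 + c ^ 2 * b ^ 2 := by
    nlinarith [sq_nonneg (a - c * b)]
  calc a * b ≤ 2 * p * ((F ^ 2 + c ^ 2 * G ^ 2) / c) := by
        rw [mul_div_assoc', le_div_iff₀ hc]
        linarith
    _ = 2 * p * A * B * (F ^ 2 / A ^ 2 + G ^ 2 / B ^ 2) := by
        simp only [c]
        field_simp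

/-- Under the importance-sampling condition
p_i ≥ (1/4)(‖x_i‖² + γ‖y_i‖²)/(‖X‖_F² + γ‖Y‖_F²) with γ = ‖X‖_op²/‖Y‖_op², each
per-sample rank-one matrix (1/p_i)·x_iᵀy_i has spectral norm (equal to
‖x_i‖₂‖y_i‖₂/p_i) bounded by 2‖X‖_op‖Y‖_op(srank X + srank Y). -/
theorem amm_per_sample_bound {n q d : ℕ}
    (X : Matrix (Fin n) (Fin q) ℝ) (Y : Matrix (Fin n) (Fin d) ℝ)
    (hX : X ≠ 0) (hY : Y ≠ 0)
    (p : Fin n → ℝ) (hp : ∀ i, 0 < p i)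
    (hplb : ∀ i,
      (1 / 4) * (((∑ j, (X i j) ^ 2) +
          (opNorm X ^ 2 / opNorm Y ^ 2) * ∑ j, (Y i j) ^ 2) /
        (frobNorm X ^ 2 + (opNorm X ^ 2 / opNorm Y ^ 2) * frobNorm Y ^ 2)) ≤ p i) :
    ∀ i : Fin n,
      Real.sqrt (∑ j, (X i j) ^ 2) * Real.sqrt (∑ j, (Y i j) ^ 2) ≤
        2 * p i * opNorm X * opNorm Y * (srank X + srank Y) ∧
      opNorm ((p i)⁻¹ • Matrix.vecMulVec (X i) (Y i)) ≤
        2 * opNorm X * opNorm Y * (srank X + srank Y) := by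
  intro i
  have hrow : Real.sqrt (∑ j, X i j ^ 2) * Real.sqrt (∑ j, Y i j ^ 2) ≤
      2 * p i * opNorm X * opNorm Y * (srank X + srank Y) := by
    have h := hplb i
    rw [← Real.sq_sqrt (Finset.sum_nonneg fun j _ => sq_nonneg (X i j)),
      ← Real.sq_sqrt (Finset.sum_nonneg fun j _ => sq_nonneg (Y i j))] at h
    exact mul_le_of_sampling_lower_bound (opNorm_pos hX) (opNorm_pos hY) (frobNorm_pos hX) h
  refine ⟨hrow, ?_⟩
  rw [opNorm_smul, opNorm_vecMulVec, abs_of_pos (inv_pos.2 (hp i)), inv_mul_le_iff₀ (hp i)]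
  exact hrow.trans_eq (by ring)
end

section
/- Let x₁, …, x_n ∈ ℝ^d, let v ∈ ℝⁿ have strictly positive coordinates, and let q ∈ ℝ^d. Define N := Σ_{j∈[n]} v_j·exp(‖x_j‖₂²/2) and, for each i ∈ [n], w_i := √(2·log(N / (v_i·exp(‖x_i‖₂²/2)))) (which is well-defined since v_i·exp(‖x_i‖₂²/2) ≤ N). Define the augmented points x′_i := x_i ⊕ [w_i] ∈ ℝ^{d+1} and q′ := q ⊕ [0] ∈ ℝ^{d+1}. Then the weighted exponential kernel density satisfies the identity Σ_{i∈[n]} v_i·exp(⟨x_i, q⟩) = n·N·exp(‖q‖₂²/2)·μ_{X′}(q′), where μ_{X′}(q′) := (1/n)·Σ_{i∈[n]} exp(−‖x′_i − q′‖₂²/2) is the Gaussian kernel density of the augmented dataset X′ = {x′_1,…,x′_n} at q′. -/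
/-- Reduction of weighted exponential KDE to Gaussian KDE: with
N = Σⱼ vⱼ·exp(‖xⱼ‖²/2), wᵢ = √(2·log(N/(vᵢ·exp(‖xᵢ‖²/2)))), augmented points
x′ᵢ = xᵢ ⊕ [wᵢ] and q′ = q ⊕ [0], we have
Σᵢ vᵢ·exp(⟨xᵢ,q⟩) = n·N·exp(‖q‖²/2)·μ_{X′}(q′), where
μ_{X′}(q′) = (1/n)·Σᵢ exp(−‖x′ᵢ − q′‖²/2). -/
theorem weighted_expKDE_eq_gaussianKDE {n d : ℕ}
    (x : Fin n → Fin d → ℝ) (v : Fin n → ℝ) (hv : ∀ i, 0 < v i) (q : Fin d → ℝ) :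
    (∑ i, v i * Real.exp (∑ a, x i a * q a)) =
      (n : ℝ) * (∑ j, v j * Real.exp ((∑ a, x j a ^ 2) / 2)) *
        Real.exp ((∑ a, q a ^ 2) / 2) *
        ((1 / (n : ℝ)) * ∑ i, Real.exp (-(∑ a : Fin (d + 1),
            (Fin.snoc (x i)
                (Real.sqrt (2 * Real.log
                  ((∑ j, v j * Real.exp ((∑ b, x j b ^ 2) / 2)) /
                    (v i * Real.exp ((∑ b, x i b ^ 2) / 2))))) a -
              Fin.snoc q (0 : ℝ) a) ^ 2) / 2)) := by
  rcases Nat.eq_zero_or_pos n with hn | hn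
  · subst hn; simp
  set N : ℝ := ∑ j, v j * Real.exp ((∑ b, x j b ^ 2) / 2) with hN
  have hc : ∀ i : Fin n, 0 < v i * Real.exp ((∑ b, x i b ^ 2) / 2) := fun i =>
    mul_pos (hv i) (Real.exp_pos _)
  have hNpos : 0 < N :=
    Finset.sum_pos (fun i _ => hc i) (by simp [Finset.univ_nonempty_iff, Fin.pos_iff_nonempty.mp hn])
  have hle : ∀ i : Fin n, v i * Real.exp ((∑ b, x i b ^ 2) / 2) ≤ N := fun i =>
    Finset.single_le_sum (fun j _ => (hc j).le) (Finset.mem_univ i)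
  have key : ∀ i : Fin n,
      Real.exp (-(∑ a : Fin (d + 1),
            (Fin.snoc (x i)
                (Real.sqrt (2 * Real.log
                  (N / (v i * Real.exp ((∑ b, x i b ^ 2) / 2))))) a -
              Fin.snoc q (0 : ℝ) a) ^ 2) / 2) =
      v i * Real.exp (∑ a, x i a * q a) * Real.exp (-((∑ a, q a ^ 2) / 2)) / N := by
    intro i
    set c : ℝ := v i * Real.exp ((∑ b, x i b ^ 2) / 2) with hcdef
    have hr1 : (1 : ℝ) ≤ N / c := (one_le_div (hc i)).mpr (hle i)
    have hlog : 0 ≤ Real.log (N / c) := Real.log_nonneg hr1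
    have hw2 : (Real.sqrt (2 * Real.log (N / c))) ^ 2 = 2 * Real.log (N / c) :=
      Real.sq_sqrt (by linarith)
    have hsum : (∑ a : Fin (d + 1),
        (Fin.snoc (x i) (Real.sqrt (2 * Real.log (N / c))) a -
          Fin.snoc q (0 : ℝ) a) ^ 2) =
        (∑ a : Fin d, (x i a - q a) ^ 2) + 2 * Real.log (N / c) := by
      rw [Fin.sum_univ_castSucc]
      simp only [Fin.snoc_castSucc, Fin.snoc_last, sub_zero, hw2]
    have hA : (∑ a : Fin d, (x i a - q a) ^ 2) =
        (∑ b, x i b ^ 2) - 2 * (∑ a, x i a * q a) + (∑ a, q a ^ 2) := by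
      rw [Finset.mul_sum, ← Finset.sum_sub_distrib, ← Finset.sum_add_distrib]
      exact Finset.sum_congr rfl (fun a _ => by ring)
    rw [hsum, hA]
    have hexplog : Real.exp (-Real.log (N / c)) = c / N := by
      rw [Real.exp_neg, Real.exp_log (by positivity), inv_div]
    have : (-((∑ b, x i b ^ 2) - 2 * (∑ a, x i a * q a) + (∑ a, q a ^ 2) +
        2 * Real.log (N / c)) / 2) =
        (-((∑ b, x i b ^ 2) / 2)) + (∑ a, x i a * q a) + (-((∑ a, q a ^ 2) / 2))
          + (-Real.log (N / c)) := by ring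
    rw [this, Real.exp_add, Real.exp_add, Real.exp_add, hexplog, hcdef]
    rw [Real.exp_neg (((∑ b, x i b ^ 2)) / 2)]
    field_simp
  rw [Finset.sum_congr rfl (fun i _ => key i)]
  have hnne : (n : ℝ) ≠ 0 := Nat.cast_ne_zero.mpr hn.ne'
  rw [← Finset.sum_div, ← Finset.sum_mul]
  rw [Real.exp_neg ((∑ a, q a ^ 2) / 2)]
  field_simp
end
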